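/- arXiv:1902.02754 — 4 statements merged into one kernel-verified Lean document; each statement's English description precedes it below -/
import Mathlib

section
/- In the polynomial ring ℂ[x₀, x₁, ..., x_n] with n ≥ 3, let J be the ideal generated by the 2×2 minors of the matrix [[x₁,...,x_{n-1}],[x₂,...,x_n]] together with the 2×2 minors of [[x₀,...,x_{n-2}],[x₁,...,x_{n-1}]]. Then for every 1 ≤ j ≤ n-1, the polynomial x_j·(x₀ x_n - x₁ x_{n-1}) lies in J. -/
/-!
Writing `m(a, b) = x_a x_{b+1} - x_{a+1} x_b`, the polynomial in question is `x_j · m(0, n-1)`, and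
`x_j · m(0, n-1) = x_0 · m(j, n-1) + x_{n-1} · m(0, j)` expresses it through a minor of each matrix.
For `j = n - 1` the minor `m(0, n-1)` is not one of the second matrix, and
`x_{n-1} · m(0, n-1) = x_1 · m(n-2, n-1) + x_n · m(0, n-2)` is used instead.
-/

open MvPolynomial
open Fin.NatCast

section HankelMinor

variable {R : Type*} [CommRing R]

/-- The minor on columns `a`, `b` of the Hankel matrix `[[x₀, x₁, …], [x₁, x₂, …]]`. -/
def hankelMinor (x : ℕ → R) (a b : ℕ) : R :=
  x a * x (b + 1) - x (a + 1) * x b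

theorem mul_hankelMinor_zero_mem {I : Ideal R} {x : ℕ → R} {j m : ℕ}
    (h₁ : hankelMinor x j m ∈ I) (h₂ : hankelMinor x 0 j ∈ I) :
    x j * hankelMinor x 0 m ∈ I := by
  have key : x j * hankelMinor x 0 m = x 0 * hankelMinor x j m + x m * hankelMinor x 0 j := by
    simp only [hankelMinor]; ring
  rw [key]
  exact I.add_mem (I.mul_mem_left _ h₁) (I.mul_mem_left _ h₂)

theorem mul_hankelMinor_zero_succ_mem {I : Ideal R} {x : ℕ → R} {k : ℕ}
    (h₁ : hankelMinor x k (k + 1) ∈ I) (h₂ : hankelMinor x 0 k ∈ I) :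
    x (k + 1) * hankelMinor x 0 (k + 1) ∈ I := by
  have key : x (k + 1) * hankelMinor x 0 (k + 1) =
      x 1 * hankelMinor x k (k + 1) + x (k + 2) * hankelMinor x 0 k := by
    simp only [hankelMinor]; ring
  rw [key]
  exact I.add_mem (I.mul_mem_left _ h₁) (I.mul_mem_left _ h₂)

end HankelMinor

theorem stmt_13 (n : ℕ) (hn : 3 ≤ n)
    (J : Ideal (MvPolynomial (Fin (n + 1)) ℂ))
    (hJ : J = Ideal.span
      ({p | ∃ a b : ℕ, 1 ≤ a ∧ a < b ∧ b ≤ n - 1 ∧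
          p = X ((a : Fin (n + 1))) * X (((b + 1 : ℕ) : Fin (n + 1)))
            - X (((a + 1 : ℕ) : Fin (n + 1))) * X ((b : Fin (n + 1)))} ∪
       {p | ∃ a b : ℕ, a < b ∧ b ≤ n - 2 ∧
          p = X ((a : Fin (n + 1))) * X (((b + 1 : ℕ) : Fin (n + 1)))
            - X (((a + 1 : ℕ) : Fin (n + 1))) * X ((b : Fin (n + 1)))})) :
    ∀ j : ℕ, 1 ≤ j → j ≤ n - 1 →
      X ((j : Fin (n + 1))) *
        (X ((0 : Fin (n + 1))) * X ((n : Fin (n + 1)))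
          - X ((1 : Fin (n + 1))) * X (((n - 1 : ℕ) : Fin (n + 1)))) ∈ J := by
  intro j hj₁ hj₂
  set x : ℕ → MvPolynomial (Fin (n + 1)) ℂ := fun i => X (i : Fin (n + 1)) with hx
  have hFirst : ∀ a b, 1 ≤ a → a < b → b ≤ n - 1 → hankelMinor x a b ∈ J :=
    fun a b h₁ h₂ h₃ => hJ ▸ Ideal.subset_span (Or.inl ⟨a, b, h₁, h₂, h₃, rfl⟩)
  have hSecond : ∀ a b, a < b → b ≤ n - 2 → hankelMinor x a b ∈ J :=
    fun a b h₁ h₂ => hJ ▸ Ideal.subset_span (Or.inr ⟨a, b, h₁, h₂, rfl⟩)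
  obtain ⟨k, rfl⟩ : ∃ k, n = k + 3 := ⟨n - 3, by omega⟩
  suffices x j * hankelMinor x 0 (k + 2) ∈ J by
    simpa only [hankelMinor, hx, Nat.cast_zero, Nat.cast_one, zero_add,
      show k + 3 - 1 = k + 2 from rfl] using this
  rcases (by omega : j ≤ k + 1 ∨ j = k + 2) with hj | rfl
  · exact mul_hankelMinor_zero_mem (hFirst j (k + 2) hj₁ (by omega) le_rfl)
      (hSecond 0 j (by omega) hj)
  · exact mul_hankelMinor_zero_succ_mem (hFirst (k + 1) (k + 2) (by omega) (by omega) le_rfl)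
      (hSecond 0 (k + 1) (by omega) le_rfl)
end

section
/- Let f₁, ..., f_m be polynomials in ℂ[x₀,...,x_n], homogeneous of degree 2, and let p̃ ∈ ℂ^{n+1} be a point such that f_i(p̃) = 0 for all i and the gradients ∇f₁(p̃), ..., ∇f_m(p̃) ∈ ℂ^{n+1} are linearly independent. If g₁, ..., g_m are homogeneous linear forms with Σᵢ gᵢ fᵢ = 0 (identically), then gᵢ(p̃) = 0 for every i. -/
open MvPolynomial

theorem MvPolynomial.eval_pderiv_sum_mul_of_eval_eq_zero {R σ ι : Type*} [CommSemiring R]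
    [Fintype ι] (f g : ι → MvPolynomial σ R) (p : σ → R) (hvan : ∀ i, eval p (f i) = 0)
    (j : σ) :
    eval p (pderiv j (∑ i, g i * f i)) = ∑ i, eval p (g i) * eval p (pderiv j (f i)) := by
  simp only [map_sum, Derivation.leibniz, smul_eq_mul, map_add, map_mul, hvan, zero_mul,
    add_zero]

theorem stmt_16_general (n m : ℕ) (f : Fin m → MvPolynomial (Fin (n + 1)) ℂ)
    (p : Fin (n + 1) → ℂ) (hvan : ∀ i, eval p (f i) = 0)
    (hind : LinearIndependent ℂ (fun i : Fin m => fun j : Fin (n + 1) => eval p (pderiv j (f i))))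
    (g : Fin m → MvPolynomial (Fin (n + 1)) ℂ)
    (hsyz : ∑ i, g i * f i = 0) :
    ∀ i, eval p (g i) = 0 := by
  refine Fintype.linearIndependent_iff.mp hind (fun i => eval p (g i)) (funext fun j => ?_)
  have h := eval_pderiv_sum_mul_of_eval_eq_zero f g p hvan j
  rw [hsyz, map_zero, map_zero] at h
  simpa [Finset.sum_apply] using h.symm

theorem stmt_16 (n m : ℕ) (f : Fin m → MvPolynomial (Fin (n + 1)) ℂ)
    (hfhom : ∀ i, (f i).IsHomogeneous 2)
    (p : Fin (n + 1) → ℂ) (hvan : ∀ i, eval p (f i) = 0)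
    (hind : LinearIndependent ℂ (fun i : Fin m => fun j : Fin (n + 1) => eval p (pderiv j (f i))))
    (g : Fin m → MvPolynomial (Fin (n + 1)) ℂ)
    (hghom : ∀ i, (g i).IsHomogeneous 1)
    (hsyz : ∑ i, g i * f i = 0) :
    ∀ i, eval p (g i) = 0 :=
  stmt_16_general n m f p hvan hind g hsyz
end

section
/- Let P ⊂ ℝ^d be a lattice polytope whose lattice points are covered by k lines all parallel to a primitive vector v ∈ ℤ^d, with the i-th line containing a segment of lattice length a_i ≥ 0 of lattice points of P. Then there is an affine-linear map ℤ^k → ℤ^d inducing a bijection between the lattice points of the Lawrence prism P' = conv{0, e₁, ..., e_{k-1}, a₀e_k, e₁+a₁e_k, ..., e_{k-1}+a_{k-1}e_k} ⊂ ℝ^k and the lattice points of P. -/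
/-- The set of lattice points of a subset of `ℝ^d`. -/
def latticePoints {d : ℕ} (P : Set (Fin d → ℝ)) : Set (Fin d → ℤ) :=
  {z | (fun i => (z i : ℝ)) ∈ P}

/-- The `i`-th "bottom" vertex of the Lawrence prism in `ℝ^k`:
`0` for `i = 0` and the standard basis vector `e_i` for `1 ≤ i ≤ k-1`. -/
def lawrenceBottom (k : ℕ) (i : Fin k) : Fin k → ℝ :=
  if i.val = 0 then 0 else fun j => if j.val = i.val - 1 then 1 else 0

/-- The last standard basis vector `e_k` of `ℝ^k`. -/
def lawrenceHeightDir (k : ℕ) : Fin k → ℝ :=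
  fun j => if j.val = k - 1 then 1 else 0

/-- The vertex set `{0, e₁, …, e_{k-1}, a₀e_k, e₁+a₁e_k, …, e_{k-1}+a_{k-1}e_k}`
of the Lawrence prism. -/
def lawrenceVerts (k : ℕ) (a : Fin k → ℕ) : Set (Fin k → ℝ) :=
  (Set.range fun i : Fin k => lawrenceBottom k i) ∪
    (Set.range fun i : Fin k => lawrenceBottom k i + (a i : ℝ) • lawrenceHeightDir k)

/-! A lattice point of the Lawrence prism is a convex combination of its vertices. Grouping the
weights along the vertical edges `[e_i, e_i + a_i e_k]` (with `e_0 = 0`), the first `k - 1`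
coordinates of the point are the weights of the edges with `i ≥ 1`; so all edge weights are
integers summing to one, a single edge carries everything, and the point lies on that edge.
Hence the lattice points of the prism are exactly the `e_i + t e_k` with `0 ≤ t ≤ a_i`. The
affine map with `e_i ↦ b_i` (and `0 ↦ b_0`) and `e_k ↦ b_0 + v` sends them to the `b_i + t v`,
injectively because the lines are distinct and `v ≠ 0`. -/

theorem Set.InjOn.bijOn_image_of_comp {α β γ : Type*} {f : β → γ} {g : α → β}
    {s : Set α} (h : Set.InjOn (f ∘ g) s) : Set.BijOn f (g '' s) ((f ∘ g) '' s) := by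
  rw [Set.image_comp]
  exact h.image_of_comp.bijOn_image

theorem injective_add_zsmul_of_ne {ι M : Type*} [AddCommGroup M] [Module.IsTorsionFree ℤ M]
    {b : ι → M} {v : M} (hv : v ≠ 0)
    (hb : ∀ i j, i ≠ j → ∀ t : ℤ, b i ≠ b j + t • v) :
    Function.Injective fun p : ι × ℤ => b p.1 + p.2 • v := by
  rintro ⟨i, t⟩ ⟨j, s⟩ h
  dsimp only at h
  obtain rfl : i = j := by
    by_contra hij
    exact hb i j hij (s - t) (by rw [sub_smul, ← add_sub_assoc, ← h]; abel)
  rw [smul_left_injective ℤ hv (add_left_cancel h)]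

section StdSimplex

variable {R ι E : Type*} [Field R] [LinearOrder R] [IsStrictOrderedRing R] [Fintype ι]
  [AddCommGroup E] [Module R E]

theorem convexHull_range_eq_image_stdSimplex (f : ι → E) :
    convexHull R (Set.range f) = Fintype.linearCombination R f '' stdSimplex R ι := by
  classical
  rw [← convexHull_rangle_single_eq_stdSimplex, LinearMap.image_convexHull, ← Set.range_comp]
  congr 2
  ext i
  simp

theorem eq_single_of_mem_stdSimplex_of_apply_eq_one [DecidableEq ι] {ν : ι → R}
    (hν : ν ∈ stdSimplex R ι) {i : ι} (hi : ν i = 1) : ν = Pi.single i 1 := by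
  funext j
  rcases eq_or_ne j i with rfl | hji
  · simp [hi]
  have hpair : ν i + ν j ≤ 1 := by
    rw [← Finset.sum_pair hji.symm, ← hν.2]
    exact Finset.sum_le_sum_of_subset_of_nonneg (Finset.subset_univ _) fun k _ _ => hν.1 k
  simp only [Pi.single_apply, hji, if_false]
  linarith [hν.1 j]

theorem exists_eq_single_of_mem_stdSimplex_of_int [DecidableEq ι] {ν : ι → R}
    (hν : ν ∈ stdSimplex R ι) (i₀ : ι) (hint : ∀ i ≠ i₀, ∃ m : ℤ, ν i = m) :
    ∃ i, ν = Pi.single i 1 := by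
  by_cases h : ∃ i ≠ i₀, ν i ≠ 0
  · obtain ⟨i, hi, hne⟩ := h
    obtain ⟨m, hm⟩ := hint i hi
    have hm₀ : (0 : R) < m := hm ▸ (hν.1 i).lt_of_ne' hne
    have hm₁ : 1 ≤ ν i := hm ▸ Int.cast_one_le_of_pos (Int.cast_pos.mp hm₀)
    exact ⟨i, eq_single_of_mem_stdSimplex_of_apply_eq_one hν
      (le_antisymm (mem_Icc_of_mem_stdSimplex hν i).2 hm₁)⟩
  · push Not at h
    refine ⟨i₀, eq_single_of_mem_stdSimplex_of_apply_eq_one hν ?_⟩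
    rw [← hν.2, Finset.sum_eq_single i₀ (fun j _ hj => h j hj) (by simp)]

end StdSimplex

section LawrencePrism

variable {n : ℕ}

theorem lawrenceBottom_apply_castSucc (i : Fin (n + 1)) (m : Fin n) :
    lawrenceBottom (n + 1) i m.castSucc = if m.succ = i then 1 else 0 := by
  rcases Fin.eq_zero_or_eq_succ i with rfl | ⟨l, rfl⟩
  · simp [lawrenceBottom]
  · simp [lawrenceBottom, Fin.ext_iff, eq_comm]

theorem lawrenceBottom_apply_last (i : Fin (n + 1)) :
    lawrenceBottom (n + 1) i (Fin.last n) = 0 := by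
  rcases Fin.eq_zero_or_eq_succ i with rfl | ⟨l, rfl⟩
  · simp [lawrenceBottom]
  · simp [lawrenceBottom, l.isLt.ne']

theorem lawrenceHeightDir_apply_castSucc (m : Fin n) :
    lawrenceHeightDir (n + 1) m.castSucc = 0 := by
  simp [lawrenceHeightDir, m.isLt.ne]

theorem lawrenceHeightDir_apply_last : lawrenceHeightDir (n + 1) (Fin.last n) = 1 := by
  simp [lawrenceHeightDir]

def lawrencePoint (i : Fin (n + 1)) (t : ℤ) : Fin (n + 1) → ℤ :=
  Fin.snoc (fun m => if m.succ = i then 1 else 0) t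

theorem cast_lawrencePoint (i : Fin (n + 1)) (t : ℤ) :
    (fun j => (lawrencePoint i t j : ℝ)) =
      lawrenceBottom (n + 1) i + (t : ℝ) • lawrenceHeightDir (n + 1) := by
  funext j
  induction j using Fin.lastCases with
  | last => simp [lawrencePoint, lawrenceBottom_apply_last, lawrenceHeightDir_apply_last]
  | cast m => simp [lawrencePoint, lawrenceBottom_apply_castSucc, lawrenceHeightDir_apply_castSucc]

theorem lawrencePoint_mem_convexHull (a : Fin (n + 1) → ℕ) {i : Fin (n + 1)} {t : ℤ}
    (ht₀ : 0 ≤ t) (ht : t ≤ a i) :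
    (fun j => (lawrencePoint i t j : ℝ)) ∈ convexHull ℝ (lawrenceVerts (n + 1) a) := by
  set x := lawrenceBottom (n + 1) i
  set e := lawrenceHeightDir (n + 1)
  have hseg : x + (t : ℝ) • e ∈ segment ℝ x (x + (a i : ℝ) • e) := by
    have ht : (t : ℝ) ∈ segment ℝ 0 (a i : ℝ) := by
      rw [segment_eq_Icc (by positivity)]
      exact ⟨by exact_mod_cast ht₀, by exact_mod_cast ht⟩
    have := Set.mem_image_of_mem (AffineMap.lineMap x (x + e)) ht
    rw [image_segment] at this
    simpa [AffineMap.lineMap_apply, add_comm] using this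
  rw [cast_lawrencePoint]
  exact segment_subset_convexHull (Set.mem_union_left _ (Set.mem_range_self i))
    (Set.mem_union_right _ (Set.mem_range_self i)) hseg

theorem exists_weights_of_mem_convexHull_lawrenceVerts {k : ℕ} {a : Fin k → ℕ}
    {x : Fin k → ℝ} (hx : x ∈ convexHull ℝ (lawrenceVerts k a)) :
    ∃ ν ∈ stdSimplex ℝ (Fin k), ∃ μ : Fin k → ℝ, 0 ≤ μ ∧ μ ≤ ν ∧
      x = ∑ i, ν i • lawrenceBottom k i + (∑ i, μ i * a i) • lawrenceHeightDir k := by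
  rw [lawrenceVerts, ← Set.Sum.elim_range, convexHull_range_eq_image_stdSimplex] at hx
  obtain ⟨w, hw, rfl⟩ := hx
  refine ⟨fun i => w (.inl i) + w (.inr i), ⟨fun i => add_nonneg (hw.1 _) (hw.1 _), ?_⟩,
    fun i => w (.inr i), fun i => hw.1 _, fun i => le_add_of_nonneg_left (hw.1 _), ?_⟩
  · rw [← hw.2, Fintype.sum_sum_type, Finset.sum_add_distrib]
  · simp only [Fintype.linearCombination_apply, Fintype.sum_sum_type, Sum.elim_inl, Sum.elim_inr,
      smul_add, add_smul, Finset.sum_add_distrib, Finset.sum_smul, mul_smul]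
    abel

theorem exists_eq_lawrencePoint_of_mem_latticePoints {a : Fin (n + 1) → ℕ}
    {z : Fin (n + 1) → ℤ}
    (hz : z ∈ latticePoints (convexHull ℝ (lawrenceVerts (n + 1) a))) :
    ∃ i, 0 ≤ z (Fin.last n) ∧ z (Fin.last n) ≤ a i ∧
      z = lawrencePoint i (z (Fin.last n)) := by
  obtain ⟨ν, hν, μ, hμ₀, hμν, hz⟩ := exists_weights_of_mem_convexHull_lawrenceVerts hz
  have hcoord (m : Fin n) : (z m.castSucc : ℝ) = ν m.succ := by
    simpa [Finset.sum_apply, lawrenceBottom_apply_castSucc, lawrenceHeightDir_apply_castSucc]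
      using congrFun hz m.castSucc
  have hlast : (z (Fin.last n) : ℝ) = ∑ i, μ i * a i := by
    simpa [Finset.sum_apply, lawrenceBottom_apply_last, lawrenceHeightDir_apply_last]
      using congrFun hz (Fin.last n)
  obtain ⟨i, hi⟩ : ∃ i, ν = Pi.single i 1 := by
    refine exists_eq_single_of_mem_stdSimplex_of_int hν 0 fun j hj => ?_
    obtain ⟨m, rfl⟩ := Fin.exists_succ_eq.mpr hj
    exact ⟨_, (hcoord m).symm⟩
  have hμ_ne (j : Fin (n + 1)) (hj : j ≠ i) : μ j = 0 :=
    le_antisymm (by simpa [hi, hj] using hμν j) (hμ₀ j)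
  have ht : (z (Fin.last n) : ℝ) = μ i * a i := by
    rw [hlast, Finset.sum_eq_single i (fun j _ hj => by simp [hμ_ne j hj]) (by simp)]
  have hμi : μ i ≤ 1 := by simpa [hi] using hμν i
  refine ⟨i, ?_, ?_, ?_⟩
  · have : (0 : ℝ) ≤ z (Fin.last n) := ht ▸ mul_nonneg (hμ₀ i) (Nat.cast_nonneg _)
    exact_mod_cast this
  · have : (z (Fin.last n) : ℝ) ≤ a i := ht ▸ mul_le_of_le_one_left (Nat.cast_nonneg _) hμi
    exact_mod_cast this
  · funext j
    induction j using Fin.lastCases with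
    | last => simp [lawrencePoint]
    | cast m =>
      apply Int.cast_injective (α := ℝ)
      simp [hcoord, hi, lawrencePoint, Pi.single_apply, apply_ite]

theorem latticePoints_convexHull_lawrenceVerts (a : Fin (n + 1) → ℕ) :
    latticePoints (convexHull ℝ (lawrenceVerts (n + 1) a)) =
      (fun p => lawrencePoint p.1 p.2) ''
        {p : Fin (n + 1) × ℤ | 0 ≤ p.2 ∧ p.2 ≤ a p.1} := by
  ext z
  constructor
  · intro hz
    obtain ⟨i, ht₀, ht, hz⟩ := exists_eq_lawrencePoint_of_mem_latticePoints hz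
    exact ⟨(i, z (Fin.last n)), ⟨ht₀, ht⟩, hz.symm⟩
  · rintro ⟨⟨i, t⟩, ⟨ht₀, ht⟩, rfl⟩
    exact lawrencePoint_mem_convexHull a ht₀ ht

theorem linearCombination_lawrencePoint_add {M : Type*} [AddCommGroup M]
    (b : Fin (n + 1) → M) (v : M) (i : Fin (n + 1)) (t : ℤ) :
    Fintype.linearCombination ℤ (Fin.lastCases v fun m => b m.succ - b 0) (lawrencePoint i t) +
      b 0 = b i + t • v := by
  rw [Fintype.linearCombination_apply, Fin.sum_univ_castSucc]
  simp only [lawrencePoint, Fin.snoc_castSucc, Fin.snoc_last, Fin.lastCases_castSucc,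
    Fin.lastCases_last, ite_smul, one_smul, zero_smul]
  rcases Fin.eq_zero_or_eq_succ i with rfl | ⟨l, rfl⟩
  · simp [Fin.succ_ne_zero, add_comm]
  · simp only [Fin.succ_inj, Finset.sum_ite_eq', Finset.mem_univ, if_true]
    abel

end LawrencePrism

theorem stmt_17_general (d k : ℕ) (hk : 1 ≤ k)
    (P : Set (Fin d → ℝ))
    (v : Fin d → ℤ)
    (hprim : ∀ (c : ℤ) (w : Fin d → ℤ), v = c • w → IsUnit c)
    (b : Fin k → (Fin d → ℤ)) (a : Fin k → ℕ)
    (hdistinct : ∀ i j : Fin k, i ≠ j → ∀ t : ℤ, b i ≠ b j + t • v)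
    (hcover : latticePoints P =
      ⋃ i : Fin k, {z : Fin d → ℤ | ∃ t : ℤ, 0 ≤ t ∧ t ≤ (a i : ℤ) ∧ z = b i + t • v}) :
    ∃ (L : (Fin k → ℤ) →ₗ[ℤ] (Fin d → ℤ)) (c : Fin d → ℤ),
      Set.BijOn (fun z => L z + c)
        (latticePoints (convexHull ℝ (lawrenceVerts k a)))
        (latticePoints P) := by
  obtain ⟨n, rfl⟩ := Nat.exists_eq_add_of_le' hk
  have hv : v ≠ 0 := by
    rintro rfl
    simpa using hprim 0 0 (by simp)
  set S : Set (Fin (n + 1) × ℤ) := {p | 0 ≤ p.2 ∧ p.2 ≤ a p.1}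
  set L := Fintype.linearCombination ℤ (Fin.lastCases v fun m => b m.succ - b 0)
  have hL : (fun z => L z + b 0) ∘ (fun p : Fin (n + 1) × ℤ => lawrencePoint p.1 p.2) =
      fun p => b p.1 + p.2 • v :=
    funext fun p => linearCombination_lawrencePoint_add b v p.1 p.2
  have hcover' : latticePoints P = (fun p : Fin (n + 1) × ℤ => b p.1 + p.2 • v) '' S := by
    ext z
    simp [hcover, S, and_assoc, eq_comm]
  refine ⟨L, b 0, ?_⟩
  rw [latticePoints_convexHull_lawrenceVerts, hcover', ← hL]
  exact (hL ▸ (injective_add_zsmul_of_ne hv hdistinct).injOn).bijOn_image_of_comp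

theorem stmt_17 (d k : ℕ) (hk : 1 ≤ k)
    (V : Finset (Fin d → ℤ))
    (P : Set (Fin d → ℝ))
    (hP : P = convexHull ℝ ((fun (z : Fin d → ℤ) (i : Fin d) => (z i : ℝ)) '' ↑V))
    (v : Fin d → ℤ)
    (hprim : ∀ (c : ℤ) (w : Fin d → ℤ), v = c • w → IsUnit c)
    (b : Fin k → (Fin d → ℤ)) (a : Fin k → ℕ)
    (hdistinct : ∀ i j : Fin k, i ≠ j → ∀ t : ℤ, b i ≠ b j + t • v)
    (hcover : latticePoints P =
      ⋃ i : Fin k, {z : Fin d → ℤ | ∃ t : ℤ, 0 ≤ t ∧ t ≤ (a i : ℤ) ∧ z = b i + t • v}) :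
    ∃ (L : (Fin k → ℤ) →ₗ[ℤ] (Fin d → ℤ)) (c : Fin d → ℤ),
      Set.BijOn (fun z => L z + c)
        (latticePoints (convexHull ℝ (lawrenceVerts k a)))
        (latticePoints P) :=
  stmt_17_general d k hk P v hprim b a hdistinct hcover
end

section
/- Let A ⊆ Sym_{n+1}(ℝ) be an affine subspace of real symmetric (n+1)×(n+1) matrices whose intersection with the cone of positive semidefinite matrices is nonempty and compact, and let r ≥ 0 be an integer with codim(A) < C(r+2, 2). Then A contains a positive semidefinite matrix of rank at most r. -/
/-!
By Krein–Milman the compact set `K = A ∩ PSD` has an extreme point `M`. Write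
`M = U D Uᵀ` with `D` diagonal and let `T` index the `t = rank M` nonzero entries of `D`.
For every symmetric `S` supported on `T × T`, the matrices `D ± ε S` stay positive
semidefinite for small `ε > 0`, so `M ± ε U S Uᵀ ∈ K` whenever `U S Uᵀ` lies in the direction
of `A`; extremality of `M` forces `U S Uᵀ = 0`. Hence the `C(t+1, 2)`-dimensional space
`U Sym(T) Uᵀ` meets the direction of `A` trivially inside the symmetric matrices, so
`C(t+1, 2) ≤ codim A < C(r+2, 2)` and `t ≤ r`.
-/

open Module

instance Matrix.instLocallyConvexSpace {m n : Type*} :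
    LocallyConvexSpace ℝ (Matrix m n ℝ) :=
  inferInstanceAs (LocallyConvexSpace ℝ (m → n → ℝ))

theorem eq_zero_of_mem_extremePoints_of_add_mem_of_sub_mem {𝕜 E : Type*} [Field 𝕜]
    [LinearOrder 𝕜] [IsStrictOrderedRing 𝕜] [AddCommGroup E] [Module 𝕜 E] {K : Set E} {x v : E}
    (hx : x ∈ K.extremePoints 𝕜) (hadd : x + v ∈ K) (hsub : x - v ∈ K) : v = 0 := by
  have hseg : x ∈ openSegment 𝕜 (x - v) (x + v) :=
    ⟨1 / 2, 1 / 2, by norm_num, by norm_num, by norm_num, by module⟩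
  simpa using ((mem_extremePoints.mp hx).2 _ hsub _ hadd hseg).1

namespace Matrix

section SymmetricSupportedOn

variable {ι R : Type*} [CommRing R]

variable (R) in
def symmetricSupportedOn (T : Finset ι) : Submodule R (Matrix ι ι R) where
  carrier := {H | H.IsSymm ∧ ∀ i j, (i ∉ T ∨ j ∉ T) → H i j = 0}
  add_mem' := fun ⟨ha, ha'⟩ ⟨hb, hb'⟩ =>
    ⟨ha.add hb, fun i j h => by simp [ha' i j h, hb' i j h]⟩
  zero_mem' := ⟨isSymm_zero, fun _ _ _ => rfl⟩
  smul_mem' := fun c _ ⟨ha, ha'⟩ => ⟨ha.smul c, fun i j h => by simp [ha' i j h]⟩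

theorem mem_symmetricSupportedOn_univ [Fintype ι] {H : Matrix ι ι R} :
    H ∈ symmetricSupportedOn R (Finset.univ : Finset ι) ↔ H.IsSymm := by
  simp [symmetricSupportedOn]

variable [DecidableEq ι]

def symmetricSupportedOnEquiv (T : Finset ι) :
    symmetricSupportedOn R T ≃ₗ[R] (T.sym2 → R) where
  toFun H z := Sym2.lift ⟨fun i j => (H : Matrix ι ι R) i j, fun i j => H.2.1.apply j i⟩ z
  map_add' _ _ := by ext ⟨z, _⟩; induction z using Sym2.ind; rfl
  map_smul' _ _ := by ext ⟨z, _⟩; induction z using Sym2.ind; rfl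
  invFun f := ⟨of fun i j => if h : s(i, j) ∈ T.sym2 then f ⟨_, h⟩ else 0, by
    refine ⟨?_, fun i j hij => ?_⟩
    · ext i j
      simp only [transpose_apply, of_apply, Sym2.eq_swap]
    · have : s(i, j) ∉ T.sym2 := by rw [Finset.mk_mem_sym2_iff]; tauto
      simp only [of_apply, dif_neg this]⟩
  left_inv H := by
    ext i j
    by_cases hij : s(i, j) ∈ T.sym2
    · simp only [of_apply, dif_pos hij]
      rfl
    · simp only [hij, of_apply, dite_false]
      rw [Finset.mk_mem_sym2_iff, not_and_or] at hij
      exact (H.2.2 i j hij).symm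
  right_inv f := by
    ext ⟨z, hz⟩
    induction z using Sym2.ind
    simp only [of_apply, Sym2.lift_mk, dif_pos hz]

theorem finrank_symmetricSupportedOn [StrongRankCondition R] (T : Finset ι) :
    finrank R (symmetricSupportedOn R T) = (T.card + 1).choose 2 := by
  rw [(symmetricSupportedOnEquiv T).finrank_eq, finrank_fintype_fun_eq_card,
    Fintype.card_coe, Finset.card_sym2]

end SymmetricSupportedOn

section Perturbation

variable {ι : Type*} [Fintype ι]

theorem abs_dotProduct_mulVec_le_of_support {S : Matrix ι ι ℝ} {T : Finset ι}
    (hS : ∀ i j, (i ∉ T ∨ j ∉ T) → S i j = 0) (x : ι → ℝ) :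
    |x ⬝ᵥ S *ᵥ x| ≤ (∑ i, ∑ j, |S i j|) * ∑ i ∈ T, x i ^ 2 := by
  set Q := ∑ i ∈ T, x i ^ 2
  have hsq : ∀ i ∈ T, x i ^ 2 ≤ Q := fun i hi =>
    Finset.single_le_sum (f := fun k => x k ^ 2) (fun k _ => sq_nonneg _) hi
  have hentry : ∀ i j, |x i * S i j * x j| ≤ |S i j| * Q := by
    intro i j
    by_cases hij : i ∈ T ∧ j ∈ T
    · have hxx : |x i| * |x j| ≤ Q := by
        nlinarith [sq_nonneg (|x i| - |x j|), sq_abs (x i), sq_abs (x j), hsq i hij.1,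
          hsq j hij.2]
      rw [abs_mul, abs_mul, mul_right_comm, mul_comm]
      exact mul_le_mul_of_nonneg_left hxx (abs_nonneg _)
    · simp [hS i j (not_and_or.mp hij)]
  calc |x ⬝ᵥ S *ᵥ x| = |∑ i, ∑ j, x i * S i j * x j| := by
        simp only [dotProduct, mulVec, Finset.mul_sum, mul_assoc]
    _ ≤ ∑ i, ∑ j, |x i * S i j * x j| :=
        (Finset.abs_sum_le_sum_abs _ _).trans
          (Finset.sum_le_sum fun i _ => Finset.abs_sum_le_sum_abs _ _)
    _ ≤ ∑ i, ∑ j, |S i j| * Q := by gcongr with i _ j _; exact hentry i j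
    _ = (∑ i, ∑ j, |S i j|) * Q := by simp only [Finset.sum_mul]

theorem le_dotProduct_diagonal_mulVec [DecidableEq ι] {d : ι → ℝ} {T : Finset ι} {δ : ℝ}
    (hd : ∀ i, 0 ≤ d i) (hδ : ∀ i ∈ T, δ ≤ d i) (x : ι → ℝ) :
    δ * ∑ i ∈ T, x i ^ 2 ≤ x ⬝ᵥ diagonal d *ᵥ x :=
  calc δ * ∑ i ∈ T, x i ^ 2 ≤ ∑ i ∈ T, d i * x i ^ 2 := by
        rw [Finset.mul_sum]; gcongr with i hi; exact hδ i hi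
    _ ≤ ∑ i, d i * x i ^ 2 :=
        Finset.sum_le_sum_of_subset_of_nonneg (Finset.subset_univ T)
          fun i _ _ => mul_nonneg (hd i) (sq_nonneg _)
    _ = x ⬝ᵥ diagonal d *ᵥ x := by
        simp only [dotProduct, mulVec_diagonal]; congr! 1; ring

variable [DecidableEq ι]

theorem posSemidef_diagonal_add_smul {d : ι → ℝ} {T : Finset ι} {δ : ℝ}
    (hd : ∀ i, 0 ≤ d i) (hδ : ∀ i ∈ T, δ ≤ d i) {S : Matrix ι ι ℝ}
    (hS : S ∈ symmetricSupportedOn ℝ T) {c : ℝ} (hc : |c| * ∑ i, ∑ j, |S i j| ≤ δ) :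
    (diagonal d + c • S).PosSemidef := by
  refine PosSemidef.of_dotProduct_mulVec_nonneg
    (isHermitian_iff_isSymm.mpr ((isSymm_diagonal d).add (hS.1.smul c))) fun x => ?_
  have hdiag := le_dotProduct_diagonal_mulVec hd hδ x
  have hpert := abs_dotProduct_mulVec_le_of_support hS.2 x
  have hsmall : |c * (x ⬝ᵥ S *ᵥ x)| ≤ δ * ∑ i ∈ T, x i ^ 2 :=
    calc |c * (x ⬝ᵥ S *ᵥ x)| ≤ |c| * ((∑ i, ∑ j, |S i j|) * ∑ i ∈ T, x i ^ 2) := by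
          rw [abs_mul]; gcongr
      _ ≤ δ * ∑ i ∈ T, x i ^ 2 := by rw [← mul_assoc]; gcongr
  rw [star_trivial, add_mulVec, dotProduct_add, smul_mulVec, dotProduct_smul, smul_eq_mul]
  linarith [neg_abs_le (c * (x ⬝ᵥ S *ᵥ x))]

theorem exists_posSemidef_diagonal_add_smul_and_sub_smul {d : ι → ℝ} {T : Finset ι}
    (hd : ∀ i, 0 ≤ d i) (hT : ∀ i ∈ T, 0 < d i) {S : Matrix ι ι ℝ}
    (hS : S ∈ symmetricSupportedOn ℝ T) :
    ∃ ε : ℝ, 0 < ε ∧ (diagonal d + ε • S).PosSemidef ∧ (diagonal d - ε • S).PosSemidef := by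
  obtain ⟨δ, hδ, hδd⟩ : ∃ δ > 0, ∀ i ∈ T, δ ≤ d i := by
    rcases T.eq_empty_or_nonempty with rfl | hne
    · exact ⟨1, one_pos, by simp⟩
    · obtain ⟨i₀, hi₀, hmin⟩ := T.exists_min_image d hne
      exact ⟨d i₀, hT i₀ hi₀, hmin⟩
  set C := ∑ i, ∑ j, |S i j|
  have hC : 0 ≤ C := by positivity
  have hε : |δ / (C + 1)| * C ≤ δ := by
    rw [abs_of_pos (by positivity), div_mul_eq_mul_div, div_le_iff₀ (by positivity)]
    nlinarith
  refine ⟨δ / (C + 1), by positivity, posSemidef_diagonal_add_smul hd hδd hS hε, ?_⟩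
  rw [sub_eq_add_neg, ← neg_smul]
  exact posSemidef_diagonal_add_smul hd hδd hS (by rwa [abs_neg])

end Perturbation

section Conjugation

variable {ι : Type*} [Fintype ι] [DecidableEq ι]

open Unitary

theorem PosSemidef.map_conjStarAlgAut {X : Matrix ι ι ℝ} (hX : X.PosSemidef)
    (u : unitary (Matrix ι ι ℝ)) : (conjStarAlgAut ℝ _ u X).PosSemidef := by
  rw [conjStarAlgAut_apply, star_eq_conjTranspose]
  exact hX.mul_mul_conjTranspose_same _

theorem PosSemidef.exists_add_smul_and_sub_smul_conj {M : Matrix ι ι ℝ} (hM : M.PosSemidef)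
    {S : Matrix ι ι ℝ} (hS : S ∈ symmetricSupportedOn ℝ
      {i | hM.isHermitian.eigenvalues i ≠ 0}) :
    ∃ ε : ℝ, 0 < ε ∧
      (M + ε • conjStarAlgAut ℝ _ hM.isHermitian.eigenvectorUnitary S).PosSemidef ∧
      (M - ε • conjStarAlgAut ℝ _ hM.isHermitian.eigenvectorUnitary S).PosSemidef := by
  set hA := hM.isHermitian
  have hd : ∀ i, 0 ≤ hA.eigenvalues i := hM.eigenvalues_nonneg
  obtain ⟨ε, hε, hadd, hsub⟩ := exists_posSemidef_diagonal_add_smul_and_sub_smul hd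
    (fun i hi => (hd i).lt_of_ne' (Finset.mem_filter.mp hi).2) hS
  have hM_eq : M = conjStarAlgAut ℝ _ hA.eigenvectorUnitary (diagonal hA.eigenvalues) := by
    simpa using hA.spectral_theorem
  refine ⟨ε, hε, ?_, ?_⟩
  · simpa only [map_add, map_smul, ← hM_eq] using hadd.map_conjStarAlgAut hA.eigenvectorUnitary
  · simpa only [map_sub, map_smul, ← hM_eq] using hsub.map_conjStarAlgAut hA.eigenvectorUnitary

end Conjugation

section Barvinok

variable {ι : Type*} [Fintype ι]

open Unitary

theorem direction_le_symmetricSupportedOn_univ {A : AffineSubspace ℝ (Matrix ι ι ℝ)}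
    (hsymm : ∀ M ∈ A, M.IsSymm) : A.direction ≤ symmetricSupportedOn ℝ Finset.univ := by
  rw [AffineSubspace.direction, vectorSpan, Submodule.span_le]
  rintro _ ⟨p, hp, q, hq, rfl⟩
  exact mem_symmetricSupportedOn_univ.mpr ((hsymm p hp).sub (hsymm q hq))

theorem choose_rank_add_finrank_direction_le {A : AffineSubspace ℝ (Matrix ι ι ℝ)}
    (hsymm : ∀ M ∈ A, M.IsSymm) {M : Matrix ι ι ℝ}
    (hM : M ∈ ((A : Set (Matrix ι ι ℝ)) ∩ {M | M.PosSemidef}).extremePoints ℝ) :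
    (M.rank + 1).choose 2 + finrank ℝ A.direction ≤ (Fintype.card ι + 1).choose 2 := by
  classical
  obtain ⟨hMA, hMpsd⟩ := hM.1
  set hA := hMpsd.isHermitian
  set T := Finset.univ.filter fun i => hA.eigenvalues i ≠ 0
  set Φ := (conjStarAlgAut ℝ (Matrix ι ι ℝ) hA.eigenvectorUnitary).toAlgEquiv.toLinearEquiv
  set P := (symmetricSupportedOn ℝ T).map (Φ : Matrix ι ι ℝ →ₗ[ℝ] Matrix ι ι ℝ)
  have hrank : M.rank = T.card := by
    rw [hA.rank_eq_card_non_zero_eigs, Fintype.card_subtype]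
  have hdisj : Disjoint P A.direction := by
    rw [Submodule.disjoint_def]
    rintro _ ⟨S, hS, rfl⟩ hSA
    obtain ⟨ε, hε, hadd, hsub⟩ := hMpsd.exists_add_smul_and_sub_smul_conj hS
    have hεSA : ε • Φ S ∈ A.direction := A.direction.smul_mem ε hSA
    have hεS : ε • Φ S = 0 := eq_zero_of_mem_extremePoints_of_add_mem_of_sub_mem hM
      ⟨by simpa [add_comm] using AffineSubspace.vadd_mem_of_mem_direction hεSA hMA, hadd⟩
      ⟨by simpa [sub_eq_neg_add] using
        AffineSubspace.vadd_mem_of_mem_direction (A.direction.neg_mem hεSA) hMA, hsub⟩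
    exact (smul_eq_zero.mp hεS).resolve_left hε.ne'
  have hP : P ≤ symmetricSupportedOn ℝ Finset.univ := by
    rintro _ ⟨S, hS, rfl⟩
    have hS' : S.IsHermitian := isHermitian_iff_isSymm.mpr hS.1
    have hΦS : (conjStarAlgAut ℝ _ hA.eigenvectorUnitary S).IsHermitian := by
      rw [IsHermitian, ← star_eq_conjTranspose, ← map_star, star_eq_conjTranspose, hS'.eq]
    exact mem_symmetricSupportedOn_univ.mpr (isHermitian_iff_isSymm.mp hΦS)
  calc (M.rank + 1).choose 2 + finrank ℝ A.direction
      = finrank ℝ P + finrank ℝ A.direction := by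
        rw [hrank, LinearEquiv.finrank_map_eq, finrank_symmetricSupportedOn]
    _ = finrank ℝ ↥(P ⊔ A.direction) := by
        rw [← Submodule.finrank_sup_add_finrank_inf_eq, hdisj.eq_bot, finrank_bot, add_zero]
    _ ≤ finrank ℝ (symmetricSupportedOn ℝ (Finset.univ : Finset ι)) :=
        Submodule.finrank_mono (sup_le hP (direction_le_symmetricSupportedOn_univ hsymm))
    _ = (Fintype.card ι + 1).choose 2 := by
        rw [finrank_symmetricSupportedOn, Finset.card_univ]

end Barvinok

end Matrix

theorem stmt_19 (n r : ℕ)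
    (A : AffineSubspace ℝ (Matrix (Fin (n + 1)) (Fin (n + 1)) ℝ))
    (hsymm : ∀ M ∈ A, M.IsSymm)
    (hcodim : (n + 1) * (n + 2) / 2 < Module.finrank ℝ A.direction + (r + 2).choose 2)
    (hne : ((A : Set (Matrix (Fin (n + 1)) (Fin (n + 1)) ℝ)) ∩ {M | M.PosSemidef}).Nonempty)
    (hcpt : IsCompact ((A : Set (Matrix (Fin (n + 1)) (Fin (n + 1)) ℝ)) ∩ {M | M.PosSemidef})) :
    ∃ M ∈ (A : Set (Matrix (Fin (n + 1)) (Fin (n + 1)) ℝ)) ∩ {M | M.PosSemidef},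
      M.rank ≤ r := by
  obtain ⟨M, hM⟩ := hcpt.extremePoints_nonempty hne
  refine ⟨M, hM.1, ?_⟩
  have hbound := Matrix.choose_rank_add_finrank_direction_le hsymm hM
  have hdim : (Fintype.card (Fin (n + 1)) + 1).choose 2 = (n + 1) * (n + 2) / 2 := by
    rw [Fintype.card_fin, Nat.choose_two_right, Nat.add_sub_cancel, mul_comm]
  by_contra! hr
  have := Nat.choose_le_choose 2 (show r + 2 ≤ M.rank + 1 by omega)
  omega
end
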